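/- Let η = (1/r!) Σ_{g ∈ G} sgn(g|_{[r]}) g ∈ ℂ[T_n], where G is the maximal subgroup at the idempotent e_r. Then η is a primitive idempotent; in fact the algebra η ℂ[T_n] η is one-dimensional over ℂ. -/

import Mathlib

open Finset in
/-- The natural representation of the full transformation monoid `Function.End (Fin n)`
on `ℂ^n`, determined by `f · v_i = v_{f i}` on the standard basis. -/
noncomputable def natRep (n : ℕ) :
    Representation ℂ (Function.End (Fin n)) (Fin n → ℂ) where
  toFun f :=
    { toFun := fun x j => ∑ i, if f i = j then x i else 0
      map_add' := by
        intro x y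
        funext j
        simp only [Pi.add_apply]
        rw [← Finset.sum_add_distrib]
        congr 1; funext i; split <;> simp
      map_smul' := by
        intro c x
        funext j
        simp [Finset.mul_sum, apply_ite (fun t => c * t)] }
  map_one' := by
    refine LinearMap.ext fun x => funext fun j => ?_
    show (∑ i, if (1 : Function.End (Fin n)) i = j then x i else 0) = x j
    have h : ∀ i : Fin n, (1 : Function.End (Fin n)) i = i := fun _ => rfl
    simp only [h]
    rw [Finset.sum_ite_eq' Finset.univ j x]
    simp
  map_mul' := by
    intro f g
    refine LinearMap.ext fun x => funext fun j => ?_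
    show (∑ i, if f (g i) = j then x i else 0)
        = ∑ k, if f k = j then ∑ i, if g i = k then x i else 0 else 0
    have key : ∀ k, (if f k = j then ∑ i, if g i = k then x i else 0 else 0)
        = ∑ i, if g i = k then (if f k = j then x i else 0) else 0 := by
      intro k; split
      · rfl
      · simp
    rw [Finset.sum_congr rfl (fun k _ => key k), Finset.sum_comm]
    refine Finset.sum_congr rfl fun i _ => ?_
    rw [Finset.sum_ite_eq Finset.univ (g i) (fun k => if f k = j then x i else 0)]
    simp

lemma sum_natRep (n : ℕ) (f : Function.End (Fin n)) (x : Fin n → ℂ) :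
    ∑ j, natRep n f x j = ∑ i, x i := by
  show ∑ j, ∑ i, (if f i = j then x i else 0) = _
  rw [Finset.sum_comm]
  simp [Finset.sum_ite_eq' Finset.univ]

/-- The augmentation submodule `Aug(ℂ^n)` of the natural module: vectors whose
coordinates sum to zero. -/
noncomputable def Aug (n : ℕ) : Submodule ℂ (Fin n → ℂ) where
  carrier := {x | ∑ i, x i = 0}
  add_mem' := by intro a b ha hb; simp_all [Finset.sum_add_distrib]
  zero_mem' := by simp
  smul_mem' := by intro c a ha; simp_all [← Finset.mul_sum]

lemma natRep_mem_aug (n : ℕ) (f : Function.End (Fin n)) {x : Fin n → ℂ}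
    (hx : x ∈ Aug n) : natRep n f x ∈ Aug n := by
  have : ∑ j, natRep n f x j = 0 := by rw [sum_natRep]; exact hx
  exact this

/-- The representation of the full transformation monoid on the augmentation submodule. -/
noncomputable def augRep (n : ℕ) : Representation ℂ (Function.End (Fin n)) (Aug n) where
  toFun f := (natRep n f).restrict (p := Aug n) (q := Aug n) (fun _ hx => natRep_mem_aug n f hx)
  map_one' := by
    refine LinearMap.ext fun x => Subtype.ext ?_
    simp [LinearMap.restrict_apply]
  map_mul' := by
    intro f g
    refine LinearMap.ext fun x => Subtype.ext ?_
    simp [LinearMap.restrict_apply]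

lemma extAlg_map_mem {R M N : Type} [CommRing R] [AddCommGroup M] [Module R M]
    [AddCommGroup N] [Module R N] (r : ℕ) (f : M →ₗ[R] N) {x : ExteriorAlgebra R M}
    (hx : x ∈ ⋀[R]^r M) : ExteriorAlgebra.map f x ∈ ⋀[R]^r N := by
  rw [← ExteriorAlgebra.ιMulti_span_fixedDegree] at hx ⊢
  induction hx using Submodule.span_induction with
  | mem y hy =>
      obtain ⟨v, rfl⟩ := hy
      rw [ExteriorAlgebra.map_apply_ιMulti]
      exact Submodule.subset_span ⟨f ∘ v, rfl⟩
  | zero => simp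
  | add y z _ _ hy hz => rw [map_add]; exact Submodule.add_mem _ hy hz
  | smul c y _ hy => rw [map_smul]; exact Submodule.smul_mem _ c hy

/-- The linear map between `r`-th exterior powers induced by a linear map. -/
noncomputable def extMap {R M N : Type} [CommRing R] [AddCommGroup M] [Module R M]
    [AddCommGroup N] [Module R N] (r : ℕ) (f : M →ₗ[R] N) :
    ⋀[R]^r M →ₗ[R] ⋀[R]^r N :=
  (ExteriorAlgebra.map f).toLinearMap.restrict (p := ⋀[R]^r M) (q := ⋀[R]^r N)
    (fun _ hx => extAlg_map_mem r f hx)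

/-- The representation of the full transformation monoid on the `r`-th exterior power
of the natural module, by the diagonal action on wedge products. -/
noncomputable def extRep (n r : ℕ) :
    Representation ℂ (Function.End (Fin n)) (⋀[ℂ]^r (Fin n → ℂ)) where
  toFun f := extMap r (natRep n f)
  map_one' := by
    refine LinearMap.ext fun x => Subtype.ext ?_
    simp [extMap, LinearMap.restrict_apply, map_one, Module.End.one_eq_id,
      ExteriorAlgebra.map_id]
  map_mul' := by
    intro f g
    refine LinearMap.ext fun x => Subtype.ext ?_
    simp only [extMap, LinearMap.restrict_apply, map_mul, Module.End.mul_eq_comp,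
      ← ExteriorAlgebra.map_comp_map]
    rfl

set_option synthInstance.maxHeartbeats 1000000 in
/-- The representation of the full transformation monoid on the `r`-th exterior power
of the augmentation submodule. -/
noncomputable def extAugRep (n r : ℕ) :
    Representation ℂ (Function.End (Fin n)) (⋀[ℂ]^r ↥(Aug n)) where
  toFun f := extMap r (augRep n f)
  map_one' := by
    refine LinearMap.ext fun x => Subtype.ext ?_
    simp [extMap, LinearMap.restrict_apply, map_one, Module.End.one_eq_id,
      ExteriorAlgebra.map_id]
  map_mul' := by
    intro f g
    refine LinearMap.ext fun x => Subtype.ext ?_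
    simp only [extMap, LinearMap.restrict_apply, map_mul, Module.End.mul_eq_comp,
      ← ExteriorAlgebra.map_comp_map]
    rfl

/-- The idempotent `e_m ∈ T_n` fixing the first `m` points and sending all other
points to the first point. -/
def eIdem (n m : ℕ) : Function.End (Fin n) :=
  fun i => if h : (i : ℕ) < m then i else ⟨0, i.pos⟩

/-- The embedding of the symmetric group `S_r` into `T_n` as the maximal subgroup
at the idempotent `eIdem n r` (elements `g` with `e g e = g` invertible in `e T_n e`). -/
def permEmbed (n r : ℕ) (hr : 1 ≤ r) (hrn : r ≤ n) (σ : Equiv.Perm (Fin r)) :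
    Function.End (Fin n) :=
  fun i => Fin.castLE hrn (σ (if hi : (i : ℕ) < r then ⟨i, hi⟩ else ⟨0, hr⟩))

/-- The idempotent `η = (1/r!) ∑_{g ∈ G} sgn(g|_{[r]}) g` of the monoid algebra,
where `G ≅ S_r` is the maximal subgroup at `eIdem n r`. -/
noncomputable def eta (n r : ℕ) (hr : 1 ≤ r) (hrn : r ≤ n) :
    MonoidAlgebra ℂ (Function.End (Fin n)) :=
  (r.factorial : ℂ)⁻¹ • ∑ σ : Equiv.Perm (Fin r),
    MonoidAlgebra.single (permEmbed n r hr hrn σ) ((Equiv.Perm.sign σ : ℤ) : ℂ)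

/-- A permutation of `Fin m`, viewed as an element of the transformation monoid. -/
def permToEnd (m : ℕ) : Equiv.Perm (Fin m) →* Function.End (Fin m) where
  toFun σ := ⇑σ
  map_one' := rfl
  map_mul' := fun _ _ => rfl

/-- The wedge product of a family of `r` vectors, as an element of the `r`-th
exterior power. -/
noncomputable def wedge {M : Type} [AddCommGroup M] [Module ℂ M] (r : ℕ) (v : Fin r → M) :
    ⋀[ℂ]^r M :=
  ⟨ExteriorAlgebra.ιMulti ℂ r v, ExteriorAlgebra.ιMulti_range ℂ r ⟨v, rfl⟩⟩

/-- The basis `w_1, …, w_n` of `ℂ^n`: `w_i = v_i - v_n` for `i < n` and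
`w_n = v_1 + ⋯ + v_n`. -/
noncomputable def wBasis (n : ℕ) : Fin n → (Fin n → ℂ) :=
  fun i => if h : (i : ℕ) < n - 1
    then Pi.single i 1 - Pi.single (⟨n - 1, by omega⟩ : Fin n) 1
    else ∑ j, Pi.single j 1

lemma wBasis_mem_aug (n : ℕ) (i : Fin n) (h : (i : ℕ) < n - 1) : wBasis n i ∈ Aug n := by
  show ∑ j, wBasis n i j = 0
  simp [wBasis, h, Finset.sum_sub_distrib, Finset.sum_pi_single]

/-- The vectors `w_i = v_i - v_n` (for `i < n`) as elements of the augmentation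
submodule; junk value `0` otherwise. -/
noncomputable def wAug (n : ℕ) : Fin n → ↥(Aug n) :=
  fun i => if h : (i : ℕ) < n - 1 then ⟨wBasis n i, wBasis_mem_aug n i h⟩ else 0

/-- The trivial representation of the full transformation monoid on `ℂ`. -/
noncomputable def trivRep (n : ℕ) : Representation ℂ (Function.End (Fin n)) ℂ := 1

/-- `projDimLE R M k` : the `R`-module `M` admits a projective resolution of length
at most `k`, i.e. has projective dimension at most `k`. -/
def projDimLE (R : Type) [Ring R] (M : Type) [AddCommMonoid M] [Module R M] (k : ℕ) : Prop :=
  ∃ (P : ℕ → ModuleCat.{0} R) (d : (i : ℕ) → (P (i + 1) →ₗ[R] P i)) (π : P 0 →ₗ[R] M),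
    (∀ i, Module.Projective R (P i)) ∧
    Function.Surjective π ∧
    LinearMap.ker π = LinearMap.range (d 0) ∧
    (∀ i, LinearMap.ker (d i) = LinearMap.range (d (i + 1))) ∧
    (∀ i, k < i → Subsingleton (P i))

open Classical in
/-- The sign character of `S_n`, extended by zero to all of `T_n`. -/
noncomputable def sgnExt (n : ℕ) (f : Function.End (Fin n)) : ℂ :=
  if h : Function.Bijective f then ((Equiv.Perm.sign (Equiv.ofBijective f h) : ℤ) : ℂ) else 0

/-!
Write `S = ∑_σ sgn σ · ι σ` with `ι : S_r → T_n` the embedding onto the maximal subgroup at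
`e = ι 1`, so that `η = S / r!`. Multiplying `S` by `ι σ` on either side rescales it by `sgn σ`,
whence `S² = r! S`. For `f ∈ T_n`, the element `e f e` is either some `ι σ`, or it identifies two
points `i ≠ j` of `[r]` and is then fixed on the right by the transposition `(i j)`, whose sign
`-1` forces `(e f e) S = 0`. Hence `η ℂ[T_n] η = ℂ η`, and a nonzero idempotent whose corner
algebra is its own span is primitive.
-/

namespace MonoidAlgebra

section CommSemiring

variable {k M G : Type*} [CommSemiring k] [Monoid M] [Group G] [Fintype G]

noncomputable def charSum (ι : G →ₙ* M) (χ : G →* k) : MonoidAlgebra k M :=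
  ∑ g, single (ι g) (χ g)

variable (ι : G →ₙ* M) (χ : G →* k)

lemma single_mul_charSum (g : G) :
    single (ι g) 1 * charSum ι χ = χ g⁻¹ • charSum ι χ := by
  rw [charSum, Finset.mul_sum, Finset.smul_sum]
  simp only [single_mul_single, one_mul, smul_single', ← map_mul]
  exact Fintype.sum_equiv (Equiv.mulLeft g) _ _ fun h => by
    simp only [Equiv.coe_mulLeft, inv_mul_cancel_left]

lemma charSum_mul_single (g : G) :
    charSum ι χ * single (ι g) 1 = χ g⁻¹ • charSum ι χ := by
  rw [charSum, Finset.sum_mul, Finset.smul_sum]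
  simp only [single_mul_single, mul_one, smul_single', ← map_mul ι]
  exact Fintype.sum_equiv (Equiv.mulRight g) _ _ fun h => by
    rw [Equiv.coe_mulRight, map_mul χ h g, mul_left_comm, ← map_mul χ, inv_mul_cancel,
      map_one, mul_one]

lemma single_one_mul_charSum : single (ι 1) 1 * charSum ι χ = charSum ι χ := by
  rw [single_mul_charSum, inv_one, map_one, one_smul]

lemma charSum_mul_single_one : charSum ι χ * single (ι 1) 1 = charSum ι χ := by
  rw [charSum_mul_single, inv_one, map_one, one_smul]

lemma charSum_mul_self : charSum ι χ * charSum ι χ = Fintype.card G • charSum ι χ := by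
  have h (g : G) : single (ι g) (χ g) * charSum ι χ = charSum ι χ := by
    rw [← mul_one (χ g), ← smul_single', smul_mul_assoc, single_mul_charSum, smul_smul,
      ← map_mul, mul_inv_cancel, map_one, one_smul]
  nth_rw 1 [charSum]
  simp only [Finset.sum_mul, h, Finset.sum_const, Finset.card_univ]

lemma charSum_ne_zero [Nontrivial k] (hι : Function.Injective ι) : charSum ι χ ≠ 0 := by
  classical
  intro h
  have := congr(($h).coeff (ι 1))
  simp [charSum, coeff_sum, Finsupp.single_apply, hι.eq_iff] at this

end CommSemiring

variable {k M G : Type*} [Field k] [Monoid M] [Group G] [Fintype G] (ι : G →ₙ* M) (χ : G →* k)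

noncomputable def charIdempotent : MonoidAlgebra k M := (Fintype.card G : k)⁻¹ • charSum ι χ

lemma isIdempotentElem_charIdempotent [CharZero k] : IsIdempotentElem (charIdempotent ι χ) := by
  rw [IsIdempotentElem, charIdempotent, smul_mul_smul_comm, charSum_mul_self,
    ← Nat.cast_smul_eq_nsmul k, smul_smul, mul_assoc, inv_mul_cancel₀ (by simp), mul_one]

lemma charIdempotent_ne_zero [CharZero k] (hι : Function.Injective ι) :
    charIdempotent ι χ ≠ 0 :=
  smul_ne_zero (by simp) (charSum_ne_zero ι χ hι)

lemma single_mul_charSum_eq_zero {m : M} {g : G} (hm : m * ι g = m) (hχ : χ g ≠ 1) :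
    single m 1 * charSum ι χ = 0 := by
  have h : single m (1 : k) * charSum ι χ = χ g⁻¹ • (single m 1 * charSum ι χ) := by
    rw [← mul_smul_comm, ← single_mul_charSum, ← mul_assoc, single_mul_single, hm, mul_one]
  have hχ' : 1 - χ g⁻¹ ≠ 0 := by
    rwa [map_inv, sub_ne_zero, ne_comm, ne_eq, inv_eq_one]
  have h0 : (1 - χ g⁻¹) • (single m 1 * charSum ι χ) = 0 := by
    rw [sub_smul, one_smul, ← h, sub_self]
  exact (smul_eq_zero.mp h0).resolve_left hχ'

section CornerMonoid

variable (hcorner : ∀ m : M, (∃ g, ι 1 * m * ι 1 = ι g) ∨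
  ∃ g, χ g ≠ 1 ∧ ι 1 * m * ι 1 * ι g = ι 1 * m * ι 1)
include hcorner

lemma charSum_mul_mul_charSum_mem_span (x : MonoidAlgebra k M) : charSum ι χ * x * charSum ι χ ∈ k ∙ charSum ι χ := by
  induction x using MonoidAlgebra.induction_on with
  | of m =>
    have hS : charSum ι χ * of k M m * charSum ι χ =
        charSum ι χ * (single (ι 1 * m * ι 1) 1 * charSum ι χ) :=
      calc charSum ι χ * of k M m * charSum ι χ
          = charSum ι χ * single (ι 1) 1 * single m 1 * (single (ι 1) 1 * charSum ι χ) := by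
            rw [charSum_mul_single_one, single_one_mul_charSum, of_apply]
        _ = charSum ι χ * (single (ι 1 * m * ι 1) 1 * charSum ι χ) := by
            simp only [mul_assoc, single_mul_single, mul_one, ← mul_assoc (single _ _)]
    rw [hS]
    rcases hcorner m with ⟨g, hg⟩ | ⟨g, hχ, hg⟩
    · rw [hg, single_mul_charSum, mul_smul_comm, charSum_mul_self]
      exact Submodule.smul_mem _ _ <|
        Submodule.smul_of_tower_mem _ _ (Submodule.mem_span_singleton_self _)
    · rw [single_mul_charSum_eq_zero ι χ hg hχ, mul_zero]
      exact Submodule.zero_mem _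
  | add x y hx hy => rw [mul_add, add_mul]; exact Submodule.add_mem _ hx hy
  | smul c x hx => rw [mul_smul_comm, smul_mul_assoc]; exact Submodule.smul_mem _ c hx

lemma charIdempotent_mul_mul_charIdempotent_mem_span [CharZero k] (x : MonoidAlgebra k M) :
    charIdempotent ι χ * x * charIdempotent ι χ ∈ k ∙ charIdempotent ι χ := by
  have hc : IsUnit (Fintype.card G : k)⁻¹ := by simp
  rw [charIdempotent, Submodule.span_singleton_smul_eq hc]
  convert Submodule.smul_mem _ _ (charSum_mul_mul_charSum_mem_span ι χ hcorner x) using 1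
  rw [smul_mul_assoc, smul_mul_assoc, mul_smul_comm, smul_smul]

end CornerMonoid

end MonoidAlgebra

section Corner

variable {k A : Type*} [Field k] [Ring A] [Algebra k A] {e : A}

lemma IsIdempotentElem.eq_zero_or_eq_of_mem_span (he : IsIdempotentElem e) (he0 : e ≠ 0)
    {a : A} (ha : IsIdempotentElem a) (hae : a ∈ k ∙ e) : a = 0 ∨ a = e := by
  obtain ⟨c, rfl⟩ := Submodule.mem_span_singleton.mp hae
  have hc : (c * (c - 1)) • e = 0 := by
    rw [mul_sub, mul_one, sub_smul, sub_eq_zero, ← ha.eq, smul_mul_smul_comm, he.eq]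
  rcases mul_eq_zero.mp ((smul_eq_zero.mp hc).resolve_right he0) with rfl | hc1
  · exact .inl (zero_smul k e)
  · exact .inr (by rw [sub_eq_zero.mp hc1, one_smul])

variable (hcorner : ∀ x, e * x * e ∈ k ∙ e)
include hcorner

lemma IsIdempotentElem.eq_zero_or_eq_zero_of_add_eq (he : IsIdempotentElem e) (he0 : e ≠ 0)
    {a b : A} (ha : IsIdempotentElem a) (hab : a * b = 0)
    (hba : b * a = 0) (hsum : a + b = e) : a = 0 ∨ b = 0 := by
  have hae : a ∈ k ∙ e := by
    have : e * a * e = a := by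
      rw [← hsum, add_mul, ha.eq, hba, add_zero, mul_add, ha.eq, hab, add_zero]
    exact this ▸ hcorner a
  refine (he.eq_zero_or_eq_of_mem_span he0 ha hae).imp_right fun hae => ?_
  rw [← hae, add_eq_left] at hsum
  exact hsum

lemma IsIdempotentElem.range_mulLeft_comp_mulRight (he : IsIdempotentElem e) :
    LinearMap.range ((LinearMap.mulLeft k e).comp (LinearMap.mulRight k e)) = k ∙ e := by
  apply le_antisymm
  · rintro _ ⟨x, rfl⟩
    simpa [mul_assoc] using hcorner x
  · rw [Submodule.span_singleton_le_iff_mem]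
    exact ⟨e, by simp [he.eq]⟩

end Corner

section TransformationMonoid

variable {n r : ℕ} (hr : 1 ≤ r) (hrn : r ≤ n)

def finRetract (i : Fin n) : Fin r := if hi : (i : ℕ) < r then ⟨i, hi⟩ else ⟨0, hr⟩

lemma finRetract_castLE (x : Fin r) : finRetract hr (Fin.castLE hrn x) = x := by
  simp [finRetract, x.isLt]

def extendFin (g : Fin r → Fin r) : Function.End (Fin n) :=
  fun i => Fin.castLE hrn (g (finRetract hr i))

lemma extendFin_mul (g h : Fin r → Fin r) :
    extendFin hr hrn g * extendFin hr hrn h = extendFin hr hrn (g ∘ h) := by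
  funext i
  exact congrArg (Fin.castLE hrn ∘ g) (finRetract_castLE hr hrn _)

lemma extendFin_injective : Function.Injective (extendFin (n := n) hr hrn) := by
  intro g h hgh
  funext x
  have := congrFun hgh (Fin.castLE hrn x)
  simpa [extendFin, finRetract_castLE] using this

lemma extendFin_id_mul_mul_extendFin_id (f : Function.End (Fin n)) :
    extendFin hr hrn id * f * extendFin hr hrn id =
      extendFin hr hrn (finRetract hr ∘ f ∘ Fin.castLE hrn) :=
  rfl

lemma permEmbed_eq_extendFin (σ : Equiv.Perm (Fin r)) :
    permEmbed n r hr hrn σ = extendFin hr hrn σ :=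
  rfl

def permEmbedMulHom : Equiv.Perm (Fin r) →ₙ* Function.End (Fin n) where
  toFun := permEmbed n r hr hrn
  map_mul' σ τ := (extendFin_mul hr hrn σ τ).symm

lemma permEmbedMulHom_injective : Function.Injective (permEmbedMulHom hr hrn) :=
  (extendFin_injective hr hrn).comp DFunLike.coe_injective

noncomputable def signChar (α : Type*) [Fintype α] [DecidableEq α] : Equiv.Perm α →* ℂ :=
  (Int.castRingHom ℂ).toMonoidHom.comp ((Units.coeHom ℤ).comp Equiv.Perm.sign)

lemma signChar_swap_ne_one {α : Type*} [Fintype α] [DecidableEq α] {i j : α} (hij : i ≠ j) :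
    signChar α (Equiv.swap i j) ≠ 1 := by
  norm_num [signChar, Equiv.Perm.sign_swap hij]

lemma permEmbed_one_mul_mul_permEmbed_one (f : Function.End (Fin n)) :
    (∃ σ, permEmbed n r hr hrn 1 * f * permEmbed n r hr hrn 1 = permEmbed n r hr hrn σ) ∨
      ∃ τ, signChar (Fin r) τ ≠ 1 ∧
        permEmbed n r hr hrn 1 * f * permEmbed n r hr hrn 1 * permEmbed n r hr hrn τ =
          permEmbed n r hr hrn 1 * f * permEmbed n r hr hrn 1 := by
  simp only [permEmbed_eq_extendFin, Equiv.Perm.coe_one, extendFin_id_mul_mul_extendFin_id,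
    extendFin_mul]
  set φ := finRetract hr ∘ f ∘ Fin.castLE hrn
  by_cases hφ : Function.Injective φ
  · exact .inl ⟨Equiv.ofBijective φ (Finite.injective_iff_bijective.mp hφ), rfl⟩
  · obtain ⟨i, j, hφij, hij⟩ := Function.not_injective_iff.mp hφ
    refine .inr ⟨Equiv.swap i j, signChar_swap_ne_one hij, ?_⟩
    congr 1
    funext x
    rcases eq_or_ne x i with rfl | hxi
    · simp [hφij]
    rcases eq_or_ne x j with rfl | hxj
    · simp [hφij]
    · simp [Equiv.swap_apply_of_ne_of_ne hxi hxj]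

lemma eta_eq_charIdempotent :
    eta n r hr hrn = MonoidAlgebra.charIdempotent (permEmbedMulHom hr hrn) (signChar (Fin r)) := by
  rw [MonoidAlgebra.charIdempotent, Fintype.card_perm, Fintype.card_fin]
  rfl

end TransformationMonoid

/-- `η = (1/r!) ∑_{g ∈ G} sgn(g|_{[r]}) g ∈ ℂ[T_n]`, where `G ≅ S_r` is the maximal
subgroup at the idempotent `e_r`, is a primitive idempotent: it is idempotent, it
admits no non-trivial decomposition as a sum of orthogonal idempotents, and in fact
the corner algebra `η ℂ[T_n] η` is one-dimensional over `ℂ`. -/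
theorem eta_primitive_idempotent (n r : ℕ) (hr : 1 ≤ r) (hrn : r ≤ n) :
    IsIdempotentElem (eta n r hr hrn) ∧
    (∀ a b : MonoidAlgebra ℂ (Function.End (Fin n)),
      IsIdempotentElem a → IsIdempotentElem b → a * b = 0 → b * a = 0 →
      a + b = eta n r hr hrn → a = 0 ∨ b = 0) ∧
    Module.finrank ℂ
      ↥(LinearMap.range ((LinearMap.mulLeft ℂ (eta n r hr hrn)).comp
          (LinearMap.mulRight ℂ (eta n r hr hrn)))) = 1 := by
  rw [eta_eq_charIdempotent]
  have hidem := MonoidAlgebra.isIdempotentElem_charIdempotent (permEmbedMulHom hr hrn)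
    (signChar (Fin r))
  have hne := MonoidAlgebra.charIdempotent_ne_zero (permEmbedMulHom hr hrn) (signChar (Fin r))
    (permEmbedMulHom_injective hr hrn)
  have hcorner := MonoidAlgebra.charIdempotent_mul_mul_charIdempotent_mem_span
    (permEmbedMulHom hr hrn) (signChar (Fin r)) (permEmbed_one_mul_mul_permEmbed_one hr hrn)
  refine ⟨hidem, fun a b ha _ hab hba hsum => ?_, ?_⟩
  · exact hidem.eq_zero_or_eq_zero_of_add_eq hcorner hne ha hab hba hsum
  · rw [hidem.range_mulLeft_comp_mulRight hcorner, finrank_span_singleton hne]
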